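/- arXiv:1612.00156 — 8 statements merged into one kernel-verified Lean document; each statement's English description precedes it below -/
import Mathlib

section
/- Let a,b ≥ 1 be integers and consider the directed graph D_{a,b}. For each internal vertex α = (α₁,α₂) ∈ [a]×[b]: every directed path from α to s contains at least α₂ − a internal vertices other than α, and every directed path from α to t contains at least b − α₂ − a + 1 internal vertices other than α. -/
/-- Vertices of the graph `D_{a,b}`: the terminals `s`, `t`, and internal vertices
`inner i j` (intended range `1 ≤ i ≤ a`, `1 ≤ j ≤ b`). -/
inductive DV : Type
  | s : DV
  | t : DV
  | inner : ℕ → ℕ → DV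
  deriving DecidableEq

/-- The vertex `(i, j)` of `D_{a,b}`, with the convention `(i,0) = s`, `(i,b+1) = t`. -/
def node (b i j : ℕ) : DV :=
  if j = 0 then DV.s else if j = b + 1 then DV.t else DV.inner i j

/-- The arcs of the graph `D_{a,b}`. -/
def arc (a b : ℕ) : DV → DV → Prop := fun u v =>
  (∃ i, 1 ≤ i ∧ i ≤ a ∧
    ((u = DV.s ∧ v = DV.inner i 1) ∨ (u = DV.inner i 1 ∧ v = DV.s) ∨
     (u = DV.inner i b ∧ v = DV.t) ∨ (u = DV.t ∧ v = DV.inner i b))) ∨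
  (∃ i j, 1 ≤ i ∧ i ≤ a ∧ 1 ≤ j ∧ j < b ∧
    ((u = DV.inner i j ∧ v = DV.inner i (j + 1)) ∨
     (u = DV.inner i (j + 1) ∧ v = DV.inner i j))) ∨
  (∃ i j, 1 ≤ i ∧ i < a ∧ 2 ≤ j ∧ j ≤ b - 1 ∧ u = DV.inner i j ∧
    (v = node b (i + 1) (j - 2) ∨ v = node b (i + 1) (j + 2)))

/-- `p` is a (simple) directed path from `u` to `w` with respect to arc relation `E`,
given as the list of its vertices. -/
def DiPath {V : Type*} (E : V → V → Prop) (u w : V) (p : List V) : Prop :=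
  p.Chain' E ∧ p.head? = some u ∧ p.getLast? = some w ∧ p.Nodup

/-- Whether a vertex of `D_{a,b}` is internal. -/
def DV.isInner : DV → Bool
  | DV.inner _ _ => true
  | _ => false

/-- Potential for paths towards `s`. -/
def phiS (b : ℕ) : DV → ℤ
  | DV.s => 0
  | DV.t => (b : ℤ) + 1
  | DV.inner i j => min ((i : ℤ) + j) ((b : ℤ) + 1)

/-- Potential for paths towards `t`. -/
def phiT (b : ℕ) : DV → ℤ
  | DV.s => (b : ℤ) + 1
  | DV.t => 0
  | DV.inner i j => min ((i : ℤ) + ((b : ℤ) + 1) - j) ((b : ℤ) + 1)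

lemma stepS {a b : ℕ} {u v : DV} (h : arc a b u v) (hv : v ≠ DV.s) :
    phiS b u - (if u.isInner then 1 else 0) ≤ phiS b v := by
  rcases h with ⟨i, h1, h2, hc⟩ | ⟨i, j, h1, h2, h3, h4, hc⟩ | ⟨i, j, h1, h2, h3, h4, hu, hc⟩
  · rcases hc with ⟨hu, hv'⟩ | ⟨hu, hv'⟩ | ⟨hu, hv'⟩ | ⟨hu, hv'⟩ <;>
      first
        | (exact absurd hv' hv)
        | (subst hu; subst hv'; simp [phiS, DV.isInner] <;> omega)
  · rcases hc with ⟨hu, hv'⟩ | ⟨hu, hv'⟩ <;>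
      (subst hu; subst hv'; simp [phiS, DV.isInner]; push_cast; omega)
  · subst hu
    rcases hc with hv' | hv' <;>
      (subst hv'; simp only [node] at hv ⊢; split_ifs at hv ⊢ <;>
        simp_all [phiS, DV.isInner] <;> omega)

lemma stepT {a b : ℕ} {u v : DV} (h : arc a b u v) (hv : v ≠ DV.t) :
    phiT b u - (if u.isInner then 1 else 0) ≤ phiT b v := by
  rcases h with ⟨i, h1, h2, hc⟩ | ⟨i, j, h1, h2, h3, h4, hc⟩ | ⟨i, j, h1, h2, h3, h4, hu, hc⟩
  · rcases hc with ⟨hu, hv'⟩ | ⟨hu, hv'⟩ | ⟨hu, hv'⟩ | ⟨hu, hv'⟩ <;>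
      first
        | (exact absurd hv' hv)
        | (subst hu; subst hv'; simp [phiT, DV.isInner] <;> omega)
  · rcases hc with ⟨hu, hv'⟩ | ⟨hu, hv'⟩ <;>
      (subst hu; subst hv'; simp [phiT, DV.isInner]; push_cast; omega)
  · subst hu
    rcases hc with hv' | hv' <;>
      (subst hv'; simp only [node] at hv ⊢; split_ifs at hv ⊢ <;>
        simp_all [phiT, DV.isInner] <;> omega)

lemma lastS {a b : ℕ} {u : DV} (h : arc a b u DV.s) :
    u.isInner = true ∧ phiS b u ≤ (a : ℤ) + 1 := by
  rcases h with ⟨i, h1, h2, hc⟩ | ⟨i, j, h1, h2, h3, h4, hc⟩ | ⟨i, j, h1, h2, h3, h4, hu, hc⟩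
  · rcases hc with ⟨hu, hv'⟩ | ⟨hu, hv'⟩ | ⟨hu, hv'⟩ | ⟨hu, hv'⟩ <;>
      simp_all [phiS, DV.isInner] <;> omega
  · rcases hc with ⟨hu, hv'⟩ | ⟨hu, hv'⟩ <;> simp_all
  · subst hu
    rcases hc with hv' | hv' <;> (simp only [node] at hv'; split_ifs at hv' <;>
      simp_all [phiS, DV.isInner] <;> omega)

lemma lastT {a b : ℕ} {u : DV} (h : arc a b u DV.t) :
    u.isInner = true ∧ phiT b u ≤ (a : ℤ) + 1 := by
  rcases h with ⟨i, h1, h2, hc⟩ | ⟨i, j, h1, h2, h3, h4, hc⟩ | ⟨i, j, h1, h2, h3, h4, hu, hc⟩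
  · rcases hc with ⟨hu, hv'⟩ | ⟨hu, hv'⟩ | ⟨hu, hv'⟩ | ⟨hu, hv'⟩ <;>
      simp_all [phiT, DV.isInner] <;> omega
  · rcases hc with ⟨hu, hv'⟩ | ⟨hu, hv'⟩ <;> simp_all
  · subst hu
    rcases hc with hv' | hv' <;> (simp only [node] at hv'; split_ifs at hv' <;>
      simp_all [phiT, DV.isInner] <;> omega)

/-- Main counting lemma for paths to `s`. -/
lemma mainS {a b : ℕ} : ∀ p : List DV, p.Chain' (arc a b) → p.getLast? = some DV.s →
    p.Nodup → ∀ u, p.head? = some u →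
    phiS b u - a ≤ ((p.countP (fun v => v.isInner)) : ℤ) := by
  intro p
  induction p with
  | nil => intro _ h; simp at h
  | cons u q ih =>
    intro hchain hlast hnodup w hw
    simp at hw; subst hw
    match q with
    | [] =>
      simp [List.getLast?] at hlast
      subst hlast
      simp [phiS]
      omega
    | v :: rest =>
      have harc : arc a b u v := (List.isChain_cons_cons.mp hchain).1
      have hchain' : (v :: rest).Chain' (arc a b) := (List.isChain_cons_cons.mp hchain).2
      have hlast' : (v :: rest).getLast? = some DV.s := by
        rwa [List.getLast?_cons_cons] at hlast
      have hnodup' : (v :: rest).Nodup := hnodup.of_cons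
      by_cases hvs : v = DV.s
      · subst hvs
        have hrest : rest = [] := by
          rcases rest with _ | ⟨x, rs⟩
          · rfl
          · exfalso
            rw [List.getLast?_cons_cons] at hlast'
            obtain ⟨hne, heq⟩ := List.mem_getLast?_eq_getLast hlast'
            have hmem : DV.s ∈ x :: rs := heq ▸ List.getLast_mem hne
            exact (List.nodup_cons.mp hnodup').1 hmem
        subst hrest
        obtain ⟨hi, hphi⟩ := lastS harc
        have hcnt : List.countP (fun v => v.isInner) [u, DV.s] = 1 := by
          rcases u with _ | _ | ⟨i, j⟩ <;> simp_all [DV.isInner, List.countP_cons, DV.s]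
        rw [hcnt]
        push_cast
        omega
      · have hIH := ih hchain' hlast' hnodup' v (by simp)
        have hstep := stepS harc hvs
        by_cases hui : u.isInner = true
        · have hc : (List.countP (fun v => v.isInner) (u :: v :: rest) : ℤ)
              = (List.countP (fun v => v.isInner) (v :: rest) : ℤ) + 1 := by
            rw [List.countP_cons, if_pos hui]; push_cast; ring
          rw [if_pos hui] at hstep
          omega
        · have hc : (List.countP (fun v => v.isInner) (u :: v :: rest) : ℤ)
              = (List.countP (fun v => v.isInner) (v :: rest) : ℤ) := by
            rw [List.countP_cons, if_neg hui]; push_cast; ring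
          rw [if_neg hui] at hstep
          omega

/-- Main counting lemma for paths to `t`. -/
lemma mainT {a b : ℕ} : ∀ p : List DV, p.Chain' (arc a b) → p.getLast? = some DV.t →
    p.Nodup → ∀ u, p.head? = some u →
    phiT b u - a ≤ ((p.countP (fun v => v.isInner)) : ℤ) := by
  intro p
  induction p with
  | nil => intro _ h; simp at h
  | cons u q ih =>
    intro hchain hlast hnodup w hw
    simp at hw; subst hw
    match q with
    | [] =>
      simp [List.getLast?] at hlast
      subst hlast
      simp [phiT]
      omega
    | v :: rest =>
      have harc : arc a b u v := (List.isChain_cons_cons.mp hchain).1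
      have hchain' : (v :: rest).Chain' (arc a b) := (List.isChain_cons_cons.mp hchain).2
      have hlast' : (v :: rest).getLast? = some DV.t := by
        rwa [List.getLast?_cons_cons] at hlast
      have hnodup' : (v :: rest).Nodup := hnodup.of_cons
      by_cases hvs : v = DV.t
      · subst hvs
        have hrest : rest = [] := by
          rcases rest with _ | ⟨x, rs⟩
          · rfl
          · exfalso
            rw [List.getLast?_cons_cons] at hlast'
            obtain ⟨hne, heq⟩ := List.mem_getLast?_eq_getLast hlast'
            have hmem : DV.t ∈ x :: rs := heq ▸ List.getLast_mem hne
            exact (List.nodup_cons.mp hnodup').1 hmem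
        subst hrest
        obtain ⟨hi, hphi⟩ := lastT harc
        have hcnt : List.countP (fun v => v.isInner) [u, DV.t] = 1 := by
          rcases u with _ | _ | ⟨i, j⟩ <;> simp_all [DV.isInner, List.countP_cons, DV.t]
        rw [hcnt]
        push_cast
        omega
      · have hIH := ih hchain' hlast' hnodup' v (by simp)
        have hstep := stepT harc hvs
        by_cases hui : u.isInner = true
        · have hc : (List.countP (fun v => v.isInner) (u :: v :: rest) : ℤ)
              = (List.countP (fun v => v.isInner) (v :: rest) : ℤ) + 1 := by
            rw [List.countP_cons, if_pos hui]; push_cast; ring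
          rw [if_pos hui] at hstep
          omega
        · have hc : (List.countP (fun v => v.isInner) (u :: v :: rest) : ℤ)
              = (List.countP (fun v => v.isInner) (v :: rest) : ℤ) := by
            rw [List.countP_cons, if_neg hui]; push_cast; ring
          rw [if_neg hui] at hstep
          omega

/-- The filtered count (internal, different from the head) equals `countP isInner - 1`
when the path starts at an internal vertex. -/
lemma filter_count {α₁ α₂ : ℕ} {p : List DV} (hh : p.head? = some (DV.inner α₁ α₂))
    (hnd : p.Nodup) :
    ((p.filter (fun v => v.isInner && decide (v ≠ DV.inner α₁ α₂))).length : ℤ) =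
      (p.countP (fun v => v.isInner) : ℤ) - 1 := by
  rcases p with _ | ⟨x, q⟩
  · simp at hh
  · simp at hh
    subst hh
    have hx : DV.inner α₁ α₂ ∉ q := (List.nodup_cons.mp hnd).1
    have h1 : (List.filter (fun v => v.isInner && decide (v ≠ DV.inner α₁ α₂))
        (DV.inner α₁ α₂ :: q)) = List.filter (fun v => v.isInner && decide (v ≠ DV.inner α₁ α₂)) q := by
      simp [List.filter_cons]
    rw [h1]
    have h2 : List.filter (fun v => v.isInner && decide (v ≠ DV.inner α₁ α₂)) q
        = List.filter (fun v => v.isInner) q := by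
      apply List.filter_congr
      intro v hv
      have : v ≠ DV.inner α₁ α₂ := fun h => hx (h ▸ hv)
      simp [this]
    rw [h2, List.countP_cons, if_pos (show (DV.inner α₁ α₂).isInner = true from rfl), List.countP_eq_length_filter]
    push_cast
    ring

/-- in `D_{a,b}`, every path from an internal vertex `α = (α₁, α₂)` to `s`
contains at least `α₂ - a` internal vertices other than `α`, and every path from `α` to
`t` contains at least `b - α₂ - a + 1` internal vertices other than `α`. -/
theorem stmt_1 (a b : ℕ) (ha : 1 ≤ a) (hb : 1 ≤ b) (α₁ α₂ : ℕ)
    (hα₁ : 1 ≤ α₁) (hα₁' : α₁ ≤ a) (hα₂ : 1 ≤ α₂) (hα₂' : α₂ ≤ b) :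
    (∀ p : List DV, DiPath (arc a b) (DV.inner α₁ α₂) DV.s p →
      (α₂ : ℤ) - a ≤
        ((p.filter (fun v => v.isInner && decide (v ≠ DV.inner α₁ α₂))).length : ℤ)) ∧
    (∀ p : List DV, DiPath (arc a b) (DV.inner α₁ α₂) DV.t p →
      (b : ℤ) - α₂ - a + 1 ≤
        ((p.filter (fun v => v.isInner && decide (v ≠ DV.inner α₁ α₂))).length : ℤ)) := by
  constructor
  · rintro p ⟨hchain, hhead, hlast, hnd⟩
    have hm := mainS p hchain hlast hnd _ hhead
    rw [filter_count hhead hnd]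
    have : ((α₂ : ℤ) + 1 : ℤ) ≤ phiS b (DV.inner α₁ α₂) := by
      simp [phiS]
      omega
    omega
  · rintro p ⟨hchain, hhead, hlast, hnd⟩
    have hm := mainT p hchain hlast hnd _ hhead
    rw [filter_count hhead hnd]
    have : ((b : ℤ) - α₂ + 2 : ℤ) ≤ phiT b (DV.inner α₁ α₂) := by
      simp [phiT]
      omega
    omega
end

section
/- Let D=(V,E) be a finite directed graph with distinct vertices s,t ∈ V, let d : V → ℝ≥0 be feasible for the Path-Blocking-LP, and let θ ∈ (0,1/2). Set U := Δ^in(B^in(s,θ)) ∪ Δ^in(B^in(t,θ)). Then every vertex u ∈ V∖U has, in the subgraph of D induced by V∖U, a directed path to at most one of the vertices s and t. -/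
/-- `d` is a feasible solution of the Path-Blocking-LP for the digraph `E` with
terminals `s` and `t`. -/
def PBFeasible {V : Type*} (E : V → V → Prop) (s t : V) (d : V → ℝ) : Prop :=
  (∀ v, 0 ≤ d v) ∧ d s = 0 ∧ d t = 0 ∧
  ∀ (u : V) (P Q : List V), DiPath E u s P → DiPath E u t Q →
    1 ≤ (P.map d).sum + (Q.map d).sum - d u

/-- `B^in(s, θ)`: the set of vertices having a directed path to `s` of `d`-distance
at most `θ`. -/
def BinSet {V : Type*} (E : V → V → Prop) (d : V → ℝ) (s : V) (θ : ℝ) : Set V :=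
  {v | ∃ p : List V, DiPath E v s p ∧ (p.map d).sum ≤ θ}

/-- `Δ^in(A)`: the set of vertices outside `A` having an arc into `A`. -/
def DeltaIn {V : Type*} (E : V → V → Prop) (A : Set V) : Set V :=
  {v | v ∉ A ∧ ∃ u ∈ A, E v u}

/-- for feasible `d` and `θ ∈ (0,1/2)`, after removing
`U = Δ^in(B^in(s,θ)) ∪ Δ^in(B^in(t,θ))`, every remaining vertex has a directed path
(in the induced subgraph) to at most one of `s` and `t`. -/
theorem stmt_5 {V : Type*} [Fintype V] (E : V → V → Prop) (s t : V) (hst : s ≠ t)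
    (d : V → ℝ) (hd : PBFeasible E s t d) (θ : ℝ) (hθ : θ ∈ Set.Ioo (0 : ℝ) (1 / 2))
    (U : Set V) (hU : U = DeltaIn E (BinSet E d s θ) ∪ DeltaIn E (BinSet E d t θ)) :
    ∀ u : V, u ∉ U →
      ¬ (Relation.ReflTransGen (fun x y => E x y ∧ x ∉ U ∧ y ∉ U) u s ∧
         Relation.ReflTransGen (fun x y => E x y ∧ x ∉ U ∧ y ∉ U) u t) := by
  rintro u hu ⟨hus, hut⟩
  obtain ⟨hpos, hds, hdt, hfeas⟩ := hd
  have key : ∀ (w : V), d w = 0 →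
      (∀ a, a ∈ DeltaIn E (BinSet E d w θ) → a ∈ U) →
      ∀ x, Relation.ReflTransGen (fun x y => E x y ∧ x ∉ U ∧ y ∉ U) x w →
      x ∉ U → x ∈ BinSet E d w θ := by
    intro w hdw hDU x hrel
    induction hrel using Relation.ReflTransGen.head_induction_on with
    | refl =>
      intro _
      exact ⟨[w], ⟨List.isChain_singleton w, rfl, rfl, List.nodup_singleton w⟩,
        by simp [hdw, le_of_lt hθ.1]⟩
    | @head a c h _ ih =>
      intro ha
      have hc : c ∈ BinSet E d w θ := ih h.2.2
      by_cases hab : a ∈ BinSet E d w θ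
      · exact hab
      · exact absurd (hDU _ ⟨hab, c, hc, h.1⟩) ha
  have hs : u ∈ BinSet E d s θ := by
    refine key s hds (fun a haD => ?_) u hus hu
    rw [hU]; exact Or.inl haD
  have ht : u ∈ BinSet E d t θ := by
    refine key t hdt (fun a haD => ?_) u hut hu
    rw [hU]; exact Or.inr haD
  obtain ⟨P, hP, hPsum⟩ := hs
  obtain ⟨Q, hQ, hQsum⟩ := ht
  have := hfeas u P Q hP hQ
  have := hpos u
  have := hθ.2
  linarith
end

section
/- Let G=(V,E) be a finite undirected graph, fix s ∈ V, and let D be the directed graph on V whose arcs are: both orientations of every edge of G, together with an arc from v to s for every v ∈ V∖{s}. Suppose T ⊆ V∖{s} and there exist two distinct vertices u,v ∈ V∖T such that no vertex of V∖T has, in the subgraph of D induced by V∖T, directed paths to both u and v. Then the graph obtained from G by deleting the vertices in T has at least three connected components. -/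
/-! Every vertex `w ≠ s` outside `T` has an arc to `s`, and the edges of `G - T` are arcs in both
directions, so a vertex of `G - T` reaches (in `D - T`) everything in its component and, via `s`,
everything in the component of `s`. Hence `u`, `v` and `s` lie in three different components:
`u ~ v` would make `u` a common ancestor of `u` and `v`, and `u ~ s` would make `v` one
(`v → s ⇝ u`); this also needs `u ≠ s`, which holds since otherwise `v → s = u`. -/

namespace SimpleGraph

variable {V : Type*} {G : SimpleGraph V} {S : Set V} {r : V → V → Prop} {s u v : V}

theorem reflTransGen_of_reachable_induce (hr : ∀ x ∈ S, ∀ y ∈ S, G.Adj x y → r x y) {a b : S}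
    (h : (G.induce S).Reachable a b) : Relation.ReflTransGen r a b := by
  rw [reachable_iff_reflTransGen] at h
  exact h.lift Subtype.val fun x y hxy => hr x x.2 y y.2 hxy

theorem induce_connectedComponentMk_ne_of_not_reach_both
    (hr : ∀ x ∈ S, ∀ y ∈ S, G.Adj x y → r x y)
    (hsep : ∀ w ∈ S, ¬ (Relation.ReflTransGen r w u ∧ Relation.ReflTransGen r w v))
    (hu : u ∈ S) (hv : v ∈ S) :
    (G.induce S).connectedComponentMk ⟨u, hu⟩ ≠ (G.induce S).connectedComponentMk ⟨v, hv⟩ :=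
  fun h => hsep u hu ⟨.refl, reflTransGen_of_reachable_induce hr (ConnectedComponent.eq.mp h)⟩

theorem ne_of_not_reach_both_of_forall_rel_sink (hsink : ∀ x ∈ S, x ≠ s → r x s)
    (hsep : ∀ w ∈ S, ¬ (Relation.ReflTransGen r w u ∧ Relation.ReflTransGen r w v))
    (hv : v ∈ S) (huv : u ≠ v) : u ≠ s := by
  rintro rfl
  exact hsep v hv ⟨.single (hsink v hv huv.symm), .refl⟩

theorem induce_connectedComponentMk_ne_sink_of_not_reach_both
    (hr : ∀ x ∈ S, ∀ y ∈ S, G.Adj x y → r x y) (hsink : ∀ x ∈ S, x ≠ s → r x s)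
    (hsep : ∀ w ∈ S, ¬ (Relation.ReflTransGen r w u ∧ Relation.ReflTransGen r w v))
    (hs : s ∈ S) (hu : u ∈ S) (hv : v ∈ S) (hvs : v ≠ s) :
    (G.induce S).connectedComponentMk ⟨u, hu⟩ ≠ (G.induce S).connectedComponentMk ⟨s, hs⟩ :=
  fun h => hsep v hv
    ⟨(Relation.ReflTransGen.single (hsink v hv hvs)).trans
      (reflTransGen_of_reachable_induce hr (ConnectedComponent.eq.mp h.symm)), .refl⟩

end SimpleGraph

open SimpleGraph in
theorem stmt_8_general {V : Type*} (G : SimpleGraph V) (s : V)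
    (E : V → V → Prop) (hE : E = fun u v => G.Adj u v ∨ (v = s ∧ u ≠ s))
    (T : Set V) (hT : s ∉ T)
    (u v : V) (hu : u ∉ T) (hv : v ∉ T) (huv : u ≠ v)
    (hsep : ∀ w : V, w ∉ T →
      ¬ (Relation.ReflTransGen (fun x y => E x y ∧ x ∉ T ∧ y ∉ T) w u ∧
         Relation.ReflTransGen (fun x y => E x y ∧ x ∉ T ∧ y ∉ T) w v)) :
    ∃ c₁ c₂ c₃ : (G.induce (Tᶜ : Set V)).ConnectedComponent,
      c₁ ≠ c₂ ∧ c₁ ≠ c₃ ∧ c₂ ≠ c₃ := by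
  set R : V → V → Prop := fun x y => E x y ∧ x ∉ T ∧ y ∉ T
  have hr : ∀ x ∈ Tᶜ, ∀ y ∈ Tᶜ, G.Adj x y → R x y :=
    fun _ hx _ hy hxy => ⟨by rw [hE]; exact .inl hxy, hx, hy⟩
  have hsink : ∀ x ∈ Tᶜ, x ≠ s → R x s :=
    fun _ hx hxs => ⟨by rw [hE]; exact .inr ⟨rfl, hxs⟩, hx, hT⟩
  have hsep' : ∀ w ∈ Tᶜ, ¬ (Relation.ReflTransGen R w v ∧ Relation.ReflTransGen R w u) :=
    fun w hw h => hsep w hw h.symm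
  exact ⟨_, _, _,
    induce_connectedComponentMk_ne_of_not_reach_both hr hsep hu hv,
    induce_connectedComponentMk_ne_sink_of_not_reach_both hr hsink hsep hT hu hv
      (ne_of_not_reach_both_of_forall_rel_sink hsink hsep' hu huv.symm),
    induce_connectedComponentMk_ne_sink_of_not_reach_both hr hsink hsep' hT hv hu
      (ne_of_not_reach_both_of_forall_rel_sink hsink hsep hv huv)⟩

/-- let `D` be obtained from `G` by bidirecting every edge and adding an
arc from every vertex `v ≠ s` to `s`. If `T ⊆ V ∖ {s}` and there are distinct
`u, v ∉ T` such that no vertex of `D - T` has directed paths (in `D - T`) to both `u`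
and `v`, then `G - T` has at least three connected components. -/
theorem stmt_8 {V : Type*} [Fintype V] (G : SimpleGraph V) (s : V)
    (E : V → V → Prop) (hE : E = fun u v => G.Adj u v ∨ (v = s ∧ u ≠ s))
    (T : Set V) (hT : s ∉ T)
    (u v : V) (hu : u ∉ T) (hv : v ∉ T) (huv : u ≠ v)
    (hsep : ∀ w : V, w ∉ T →
      ¬ (Relation.ReflTransGen (fun x y => E x y ∧ x ∉ T ∧ y ∉ T) w u ∧
         Relation.ReflTransGen (fun x y => E x y ∧ x ∉ T ∧ y ∉ T) w v)) :
    ∃ c₁ c₂ c₃ : (G.induce (Tᶜ : Set V)).ConnectedComponent,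
      c₁ ≠ c₂ ∧ c₁ ≠ c₃ ∧ c₂ ≠ c₃ :=
  stmt_8_general G s E hE T hT u v hu hv huv hsep
end

section
/- Let G = (V₁ ∪ V₂ ∪ V₃, E) be a finite 3-partite undirected graph (the Vᵢ are pairwise disjoint and every edge joins vertices of two distinct parts), with each Vᵢ nonempty. Let G' be obtained from G by adding three new vertices s₁, s₂, s₃ and, for each i ∈ {1,2,3} and each v ∈ Vᵢ, an edge between sᵢ and v. Then a subset S ⊆ V₁ ∪ V₂ ∪ V₃ is a vertex cover of G if and only if the graph obtained from G' by deleting the vertices in S has at least three connected components. -/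
def auxGraph9 {V : Type*} (G : SimpleGraph V) (P : Fin 3 → Set V) :
    SimpleGraph (V ⊕ Fin 3) :=
  SimpleGraph.fromRel (fun x y =>
    match x, y with
    | Sum.inl u, Sum.inl w => G.Adj u w
    | Sum.inl u, Sum.inr i => u ∈ P i
    | _, _ => False)

section aux

variable {V : Type*} {G : SimpleGraph V} {P : Fin 3 → Set V}

lemma auxGraph9_adj_ll {u w : V} :
    (auxGraph9 G P).Adj (Sum.inl u) (Sum.inl w) ↔ G.Adj u w := by
  unfold auxGraph9
  simp only [SimpleGraph.fromRel_adj]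
  constructor
  · rintro ⟨-, h | h⟩; exact h; exact h.symm
  · intro h; exact ⟨by simp [h.ne], Or.inl h⟩

lemma auxGraph9_adj_lr {u : V} {i : Fin 3} :
    (auxGraph9 G P).Adj (Sum.inl u) (Sum.inr i) ↔ u ∈ P i := by
  unfold auxGraph9
  simp only [SimpleGraph.fromRel_adj]
  constructor
  · rintro ⟨-, h | h⟩; exact h; exact h.elim
  · intro h; exact ⟨by simp, Or.inl h⟩

lemma auxGraph9_adj_rr {i j : Fin 3} :
    ¬ (auxGraph9 G P).Adj (Sum.inr i) (Sum.inr j) := by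
  unfold auxGraph9
  simp [SimpleGraph.fromRel_adj]

end aux

/-- for a 3-partite graph `G` with nonempty parts, `S` is a vertex cover
of `G` iff deleting (the copies of) `S` from `G'` leaves at least three connected
components. -/
theorem stmt_9 {V : Type*} [Fintype V] (G : SimpleGraph V)
    (P : Fin 3 → Set V)
    (hne : ∀ i, (P i).Nonempty)
    (hdisj : ∀ i j, i ≠ j → Disjoint (P i) (P j))
    (hcover : (⋃ i, P i) = Set.univ)
    (hpartite : ∀ x y, G.Adj x y → ¬ ∃ i, x ∈ P i ∧ y ∈ P i)
    (S : Set V) :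
    (∀ x y, G.Adj x y → x ∈ S ∨ y ∈ S) ↔
      ∃ c₁ c₂ c₃ : ((auxGraph9 G P).induce ((Sum.inl '' S)ᶜ)).ConnectedComponent,
        c₁ ≠ c₂ ∧ c₁ ≠ c₃ ∧ c₂ ≠ c₃ := by
  set T : Set (V ⊕ Fin 3) := (Sum.inl '' S)ᶜ with hT
  set H := (auxGraph9 G P).induce T with hH
  have hsmem : ∀ i : Fin 3, (Sum.inr i : V ⊕ Fin 3) ∈ T := by
    intro i; simp [hT]
  let s : Fin 3 → ↥T := fun i => ⟨Sum.inr i, hsmem i⟩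
  have hmemV : ∀ v : V, (Sum.inl v : V ⊕ Fin 3) ∈ T → v ∉ S := by
    intro v hv hvS; exact hv ⟨v, hvS, rfl⟩
  have hadj : ∀ a b : ↥T, H.Adj a b ↔ (auxGraph9 G P).Adj a.1 b.1 := by
    intro a b; rfl
  -- membership in a part, from hcover
  have hsome : ∀ v : V, ∃ i, v ∈ P i := by
    intro v
    have : v ∈ ⋃ i, P i := by rw [hcover]; trivial
    simpa using this
  constructor
  · intro hS
    have key : ∀ i : Fin 3, ∀ a b : ↥T, H.Walk a b →
        (a.1 = Sum.inr i ∨ ∃ v ∈ P i, a.1 = Sum.inl v) →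
        (b.1 = Sum.inr i ∨ ∃ v ∈ P i, b.1 = Sum.inl v) := by
      intro i a b p
      induction p with
      | nil => exact id
      | cons h p ih =>
        rename_i x y z
        intro hx
        apply ih
        rw [hadj] at h
        obtain ⟨y1, hyT⟩ := y
        rcases hx with hx | ⟨v, hv, hx⟩
        · rw [hx] at h
          cases y1 with
          | inl u =>
            right
            exact ⟨u, auxGraph9_adj_lr.mp h.symm, rfl⟩
          | inr j => exact absurd h auxGraph9_adj_rr
        · rw [hx] at h
          cases y1 with
          | inl u =>
            have hGv : G.Adj v u := auxGraph9_adj_ll.mp h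
            have := hS v u hGv
            have hv' : v ∉ S := hmemV v (hx ▸ x.2)
            have hu' : u ∉ S := hmemV u hyT
            tauto
          | inr j =>
            have hvj : v ∈ P j := auxGraph9_adj_lr.mp h
            have hji : j = i := by
              by_contra hji
              exact (hdisj i j (Ne.symm hji)).ne_of_mem hv hvj rfl
            left; exact congrArg Sum.inr hji
        
    refine ⟨H.connectedComponentMk (s 0), H.connectedComponentMk (s 1),
      H.connectedComponentMk (s 2), ?_, ?_, ?_⟩ <;>
    · intro hc
      obtain ⟨p⟩ := (SimpleGraph.ConnectedComponent.exact hc)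
      first
      | exact absurd (key 0 _ _ p (Or.inl rfl)) (by simp [s])
      | exact absurd (key 1 _ _ p (Or.inl rfl)) (by simp [s])
      | exact absurd (key 2 _ _ p (Or.inl rfl)) (by simp [s])
  · rintro ⟨c₁, c₂, c₃, h12, h13, h23⟩
    by_contra hS
    push_neg at hS
    obtain ⟨x, y, hxy, hxS, hyS⟩ := hS
    obtain ⟨i, hxi⟩ := hsome x
    obtain ⟨j, hyj⟩ := hsome y
    have hij : i ≠ j := by
      rintro rfl
      exact hpartite x y hxy ⟨i, hxi, hyj⟩
    have hxT : (Sum.inl x : V ⊕ Fin 3) ∈ T := by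
      intro hmem; obtain ⟨v, hvS, hv⟩ := hmem; cases hv; exact hxS hvS
    have hyT : (Sum.inl y : V ⊕ Fin 3) ∈ T := by
      intro hmem; obtain ⟨v, hvS, hv⟩ := hmem; cases hv; exact hyS hvS
    -- s i and s j are in the same component
    have hsij : H.connectedComponentMk (s i) = H.connectedComponentMk (s j) := by
      apply SimpleGraph.ConnectedComponent.sound
      have h1 : H.Adj (s i) ⟨Sum.inl x, hxT⟩ := by
        rw [hadj]; exact (auxGraph9_adj_lr.mpr hxi).symm
      have h2 : H.Adj ⟨Sum.inl x, hxT⟩ ⟨Sum.inl y, hyT⟩ := by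
        rw [hadj]; exact auxGraph9_adj_ll.mpr hxy
      have h3 : H.Adj ⟨Sum.inl y, hyT⟩ (s j) := by
        rw [hadj]; exact auxGraph9_adj_lr.mpr hyj
      exact (h1.reachable.trans h2.reachable).trans h3.reachable
    -- every component is that of some s k
    have hrep : ∀ c : H.ConnectedComponent, ∃ k, c = H.connectedComponentMk (s k) := by
      intro c
      obtain ⟨⟨z, hz⟩, rfl⟩ := c.exists_rep
      cases z with
      | inl v =>
        obtain ⟨k, hk⟩ := hsome v
        refine ⟨k, SimpleGraph.ConnectedComponent.sound ?_⟩
        have : H.Adj ⟨Sum.inl v, hz⟩ (s k) := by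
          rw [hadj]; exact auxGraph9_adj_lr.mpr hk
        exact this.reachable
      | inr k => exact ⟨k, rfl⟩
    obtain ⟨a, ha⟩ := hrep c₁
    obtain ⟨b, hb⟩ := hrep c₂
    obtain ⟨c, hc⟩ := hrep c₃
    have hab : a ≠ b := fun h => h12 (by rw [ha, hb, h])
    have hac : a ≠ c := fun h => h13 (by rw [ha, hc, h])
    have hbc : b ≠ c := fun h => h23 (by rw [hb, hc, h])
    have tri : ∀ i a b c : Fin 3, a ≠ b → a ≠ c → b ≠ c → i = a ∨ i = b ∨ i = c := by
      decide
    have hmemi := tri i a b c hab hac hbc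
    have hmemj := tri j a b c hab hac hbc
    rcases hmemi with rfl | rfl | rfl <;> rcases hmemj with rfl | rfl | rfl <;>
      first
      | exact hij rfl
      | exact h12 (ha.trans (hsij.trans hb.symm))
      | exact h12 (ha.trans (hsij.symm.trans hb.symm))
      | exact h13 (ha.trans (hsij.trans hc.symm))
      | exact h13 (ha.trans (hsij.symm.trans hc.symm))
      | exact h23 (hb.trans (hsij.trans hc.symm))
      | exact h23 (hb.trans (hsij.symm.trans hc.symm))
end

section
/- Let a ≥ 1 and b ≥ 2a be integers, r := b − 2a + 1, R a positive integer, Ω := {0,1,…,r−1,*}, and let D_{a,b} be as defined with internal vertex set I = [a]×[b]. Let 𝒟 be the directed graph with vertex set {s,t} ∪ {v^α_x : α ∈ I, x ∈ Ω^R} and the following arcs: for every arc of D_{a,b} between s and an internal vertex α and every x ∈ Ω^R, an arc with the same direction between s and v^α_x, and similarly for arcs between t and internal vertices; for every arc (α,β) of D_{a,b} with α=(α₁,α₂), β=(β₁,β₂) both internal: if α₂ < β₂, an arc from v^α_x to v^β_y if and only if for every 1 ≤ j ≤ R one has y_j = (x_j + 1) mod r or y_j = * or x_j = *; if α₂ >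 β₂, an arc from v^α_x to v^β_y if and only if for every 1 ≤ j ≤ R one has y_j = (x_j − 1) mod r or y_j = * or x_j = *. Then for every q ∈ [R], after deleting the vertex set V_q := {v^α_x : α ∈ I, x_q = * or x_q = 0}, no vertex of 𝒟 has directed paths to both s and t. -/
/-- `v = u + 1 (mod r)`, or one of the two coordinates is `* = none`. -/
def nextOkr {r : ℕ} (u v : Option (Fin (r + 1))) : Prop :=
  u = none ∨ v = none ∨ ∃ k, u = some k ∧ v = some (k + 1)

/-- `v = u - 1 (mod r)`, or one of the two coordinates is `* = none`. -/
def prevOkr {r : ℕ} (u v : Option (Fin (r + 1))) : Prop :=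
  u = none ∨ v = none ∨ ∃ k, u = some k ∧ v = some (k - 1)

/-- The vertices of the dictatorship test graph `𝒟^st_{a,b,R,ε}`:
`Sum.inl (i, j, x)` is `v^{(i,j)}_x`, `Sum.inr false = s`, `Sum.inr true = t`.
Here `Ω = {0, …, r-1, *}` is encoded as `Option (Fin (b - 2a + 1))`. -/
abbrev W15 (a b R : ℕ) : Type :=
  (ℕ × ℕ × (Fin R → Option (Fin (b - 2 * a + 1)))) ⊕ Bool

/-- The arcs of the dictatorship test graph `𝒟^st_{a,b,R,ε}`. -/
def liftArc (a b R : ℕ) : W15 a b R → W15 a b R → Prop := fun u v =>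
  match u, v with
  | Sum.inl (i, j, x), Sum.inl (i', j', y) =>
      arc a b (DV.inner i j) (DV.inner i' j') ∧
      ((j < j' ∧ ∀ l, nextOkr (x l) (y l)) ∨ (j' < j ∧ ∀ l, prevOkr (x l) (y l)))
  | Sum.inr false, Sum.inl (i, j, _) => arc a b DV.s (DV.inner i j)
  | Sum.inl (i, j, _), Sum.inr false => arc a b (DV.inner i j) DV.s
  | Sum.inr true, Sum.inl (i, j, _) => arc a b DV.t (DV.inner i j)
  | Sum.inl (i, j, _), Sum.inr true => arc a b (DV.inner i j) DV.t
  | Sum.inr _, Sum.inr _ => False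

/-! For a surviving internal vertex `v^{(i,j)}_x` let `k = x_q ∈ {1, …, r-1}`. A horizontal arc
between survivors changes `j` and `k` by the same `±1`; a jumping arc increases `i` by one and
changes `(j, k)` by `(-2, -1)` or `(+2, +1)` (the value `k = 0` that would let `k` wrap around is
deleted). Hence `j + i - k` never decreases and `j - i - k` never increases along such arcs.
Arcs into `s` leave from vertices with `j + i - k ≤ a`, arcs into `t` from vertices with
`j - i - k ≥ a`, and the arcs out of `s` and `t` land on the wrong side of these bounds because
`k ≤ b - 2a`. A survivor reaching both terminals would satisfy
`a ≤ j - i - k < j + i - k ≤ a`. -/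

lemma arc_s_inner {a b i j : ℕ} (h : arc a b .s (.inner i j)) : 1 ≤ i ∧ j = 1 := by
  simp only [arc, node] at h; grind

lemma arc_t_inner {a b i j : ℕ} (h : arc a b .t (.inner i j)) : 1 ≤ i ∧ j = b := by
  simp only [arc, node] at h; grind

lemma arc_inner_s {a b i j : ℕ} (h : arc a b (.inner i j) .s) :
    1 ≤ i ∧ (j = 1 ∧ i ≤ a ∨ j = 2 ∧ i < a) := by
  simp only [arc, node] at h; grind

lemma arc_inner_t {a b i j : ℕ} (h : arc a b (.inner i j) .t) :
    1 ≤ i ∧ (j = b ∧ i ≤ a ∨ j + 1 = b ∧ i < a) := by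
  simp only [arc, node] at h; grind

lemma arc_inner_inner {a b i j i' j' : ℕ} (h : arc a b (.inner i j) (.inner i' j')) :
    1 ≤ i ∧
      (i' = i ∧ (j' = j + 1 ∨ j = j' + 1) ∨ i' = i + 1 ∧ (j = j' + 2 ∨ j' = j + 2)) := by
  simp only [arc, node] at h; grind

lemma nextOkr_some_val {r : ℕ} {k k' : Fin (r + 1)} (h : nextOkr (some k) (some k'))
    (hk' : (k' : ℕ) ≠ 0) : (k' : ℕ) = k + 1 := by
  obtain rfl : k' = k + 1 := by simpa [nextOkr] using h
  rw [Fin.val_add_one] at hk' ⊢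
  split_ifs at hk' ⊢
  · exact absurd rfl hk'
  · rfl

lemma prevOkr_some_val {r : ℕ} {k k' : Fin (r + 1)} (h : prevOkr (some k) (some k'))
    (hk : (k : ℕ) ≠ 0) : (k : ℕ) = k' + 1 := by
  obtain rfl : k' = k - 1 := by simpa [prevOkr] using h
  have hk0 : k ≠ 0 := fun h0 => hk (h0 ▸ rfl)
  rw [Fin.coe_sub_one, if_neg hk0]
  omega

/-- The vertex set `V_q`. -/
def deleted (a b R : ℕ) (q : Fin R) : Set (W15 a b R) :=
  {w | ∃ i j x, w = Sum.inl (i, j, x) ∧ (x q = none ∨ x q = some 0)}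

lemma exists_coord_of_not_mem_deleted {a b R i j : ℕ} {q : Fin R}
    {x : Fin R → Option (Fin (b - 2 * a + 1))}
    (h : Sum.inl (i, j, x) ∉ deleted a b R q) :
    ∃ k : Fin (b - 2 * a + 1), x q = some k ∧ (k : ℕ) ≠ 0 := by
  simp only [deleted, Set.mem_ofPred_eq, not_exists, not_and, not_or] at h
  obtain ⟨hnone, hzero⟩ := h i j x rfl
  obtain ⟨k, hk⟩ := Option.ne_none_iff_exists'.mp hnone
  exact ⟨k, hk, fun h0 => hzero (hk ▸ congrArg some (Fin.ext h0))⟩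

lemma liftArc_inl_inl_levels {a b R i j i' j' : ℕ} {q : Fin R}
    {x y : Fin R → Option (Fin (b - 2 * a + 1))} {k k' : Fin (b - 2 * a + 1)}
    (h : liftArc a b R (.inl (i, j, x)) (.inl (i', j', y))) (hx : x q = some k)
    (hy : y q = some k') (hk : (k : ℕ) ≠ 0) (hk' : (k' : ℕ) ≠ 0) :
    1 ≤ i ∧ j + i + k' ≤ j' + i' + k ∧ j' + i + k ≤ j + i' + k' := by
  obtain ⟨harc, ⟨hlt, hnext⟩ | ⟨hlt, hprev⟩⟩ := h
  · have := nextOkr_some_val (hx ▸ hy ▸ hnext q) hk'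
    have := arc_inner_inner harc
    omega
  · have := prevOkr_some_val (hx ▸ hy ▸ hprev q) hk
    have := arc_inner_inner harc
    omega

/-- The survivors that can reach `s` satisfy `j + i - x_q ≤ a`. -/
def OnSSide (a b : ℕ) {R : ℕ} (q : Fin R) : W15 a b R → Prop
  | .inl (i, j, x) => 1 ≤ i ∧ j + i ≤ a + ((x q).getD 0 : ℕ)
  | .inr false => True
  | .inr true => False

/-- The survivors that can reach `t` satisfy `j - i - x_q ≥ a`. -/
def OnTSide (a b : ℕ) {R : ℕ} (q : Fin R) : W15 a b R → Prop
  | .inl (i, j, x) => a + i + ((x q).getD 0 : ℕ) ≤ j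
  | .inr false => False
  | .inr true => True

lemma onSSide_of_liftArc {a b R : ℕ} {q : Fin R} {u v : W15 a b R} (h : liftArc a b R u v)
    (hu : u ∉ deleted a b R q) (hv : v ∉ deleted a b R q) (hS : OnSSide a b q v) :
    OnSSide a b q u := by
  rcases u with ⟨i, j, x⟩ | _ | _ <;> rcases v with ⟨i', j', y⟩ | _ | _
  · obtain ⟨k, hx, hk⟩ := exists_coord_of_not_mem_deleted hu
    obtain ⟨k', hy, hk'⟩ := exists_coord_of_not_mem_deleted hv
    have := liftArc_inl_inl_levels h hx hy hk hk'
    simp only [OnSSide, hx, hy, Option.getD_some] at hS ⊢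
    omega
  · obtain ⟨k, hx, hk⟩ := exists_coord_of_not_mem_deleted hu
    have := arc_inner_s h
    simp only [OnSSide, hx, Option.getD_some]
    omega
  · exact hS.elim
  · trivial
  · trivial
  · trivial
  · obtain ⟨k', hy, hk'⟩ := exists_coord_of_not_mem_deleted hv
    have := arc_t_inner h
    have := k'.isLt
    simp only [OnSSide, hy, Option.getD_some] at hS
    omega
  · exact h.elim
  · exact h.elim

lemma onTSide_of_liftArc {a b R : ℕ} {q : Fin R} {u v : W15 a b R} (h : liftArc a b R u v)
    (hu : u ∉ deleted a b R q) (hv : v ∉ deleted a b R q) (hT : OnTSide a b q v) :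
    OnTSide a b q u := by
  rcases u with ⟨i, j, x⟩ | _ | _ <;> rcases v with ⟨i', j', y⟩ | _ | _
  · obtain ⟨k, hx, hk⟩ := exists_coord_of_not_mem_deleted hu
    obtain ⟨k', hy, hk'⟩ := exists_coord_of_not_mem_deleted hv
    have := liftArc_inl_inl_levels h hx hy hk hk'
    simp only [OnTSide, hx, hy, Option.getD_some] at hT ⊢
    omega
  · exact hT.elim
  · obtain ⟨k, hx, hk⟩ := exists_coord_of_not_mem_deleted hu
    have := arc_inner_t h
    have := k.isLt
    simp only [OnTSide, hx, Option.getD_some]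
    omega
  · obtain ⟨k', hy, hk'⟩ := exists_coord_of_not_mem_deleted hv
    have := arc_s_inner h
    simp only [OnTSide, hy, Option.getD_some] at hT
    omega
  · exact h.elim
  · exact h.elim
  · trivial
  · trivial
  · trivial

theorem stmt_15_general (a b R : ℕ) (q : Fin R)
    (Vq : Set (W15 a b R))
    (hVq : Vq = {w | ∃ i j x, w = Sum.inl (i, j, x) ∧ (x q = none ∨ x q = some 0)}) :
    ∀ w : W15 a b R, w ∉ Vq →
      ¬ (Relation.ReflTransGen
            (fun x y => liftArc a b R x y ∧ x ∉ Vq ∧ y ∉ Vq) w (Sum.inr false) ∧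
         Relation.ReflTransGen
            (fun x y => liftArc a b R x y ∧ x ∉ Vq ∧ y ∉ Vq) w (Sum.inr true)) := by
  subst hVq
  rintro w - ⟨hs, ht⟩
  have hS : OnSSide a b q w :=
    hs.head_induction_on trivial fun hr _ ih => onSSide_of_liftArc hr.1 hr.2.1 hr.2.2 ih
  have hT : OnTSide a b q w :=
    ht.head_induction_on trivial fun hr _ ih => onTSide_of_liftArc hr.1 hr.2.1 hr.2.2 ih
  rcases w with ⟨i, j, x⟩ | _ | _
  · simp only [OnSSide, OnTSide] at hS hT
    omega
  · exact hT
  · exact hS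

/-- completeness of the dictatorship test for `{s,t}`-NodeDoubleCut:
after removing `V_q = {v^α_x : x_q = * or 0}`, no vertex has directed paths to both
`s` and `t`. -/
theorem stmt_15 (a b R : ℕ) (ha : 1 ≤ a) (hb : 2 * a ≤ b) (q : Fin R)
    (Vq : Set (W15 a b R))
    (hVq : Vq = {w | ∃ i j x, w = Sum.inl (i, j, x) ∧ (x q = none ∨ x q = some 0)}) :
    ∀ w : W15 a b R, w ∉ Vq →
      ¬ (Relation.ReflTransGen
            (fun x y => liftArc a b R x y ∧ x ∉ Vq ∧ y ∉ Vq) w (Sum.inr false) ∧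
         Relation.ReflTransGen
            (fun x y => liftArc a b R x y ∧ x ∉ Vq ∧ y ∉ Vq) w (Sum.inr true)) :=
  stmt_15_general a b R q Vq hVq
end

section
/- Let D=(V,E) be a finite directed graph with distinct vertices s,t ∈ V and |V| ≥ 3. Then the minimum, over all sets F ⊆ E for which there exists a vertex r ∈ V∖{s,t} such that the graph D−F (obtained by deleting the arcs in F) contains no directed s→r path, no directed r→t path, and no directed s→t path, of |F|, equals the minimum of β(A,B) over all pairs of sets A,B with t ∈ A ⊊ B ⊆ V∖{s}. -/
private lemma cross_lemma {α : Type*} {R : α → α → Prop} {X : α → Prop} {a b : α}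
    (h : Relation.ReflTransGen R a b) (ha : ¬ X a) (hb : X b) :
    ∃ u v, R u v ∧ ¬ X u ∧ X v := by
  induction h with
  | refl => exact absurd hb ha
  | @tail c d h step ih =>
    by_cases hc : X c
    · exact ih hc
    · exact ⟨c, d, step, hc, hb⟩

private lemma sInf_eq_of_forall {S T : Set ℕ}
    (h1 : ∀ n ∈ S, ∃ m ∈ T, m ≤ n) (h2 : ∀ n ∈ T, ∃ m ∈ S, m ≤ n) :
    sInf S = sInf T := by
  rcases S.eq_empty_or_nonempty with hS | hS
  · rcases T.eq_empty_or_nonempty with hT | hT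
    · rw [hS, hT]
    · obtain ⟨n, hn⟩ := hT
      obtain ⟨m, hm, _⟩ := h2 n hn
      simp [hS] at hm
  · have hT : T.Nonempty := by
      obtain ⟨n, hn⟩ := hS
      obtain ⟨m, hm, _⟩ := h1 n hn
      exact ⟨m, hm⟩
    apply le_antisymm
    · obtain ⟨m, hm, hle⟩ := h2 _ (Nat.sInf_mem hT)
      exact le_trans (Nat.sInf_le hm) hle
    · obtain ⟨m, hm, hle⟩ := h1 _ (Nat.sInf_mem hS)
      exact le_trans (Nat.sInf_le hm) hle

/-- the minimum number of arcs whose deletion makes, for some vertex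
`r ∉ {s,t}`, all `s → r`, `r → t` and `s → t` directed paths disappear, equals the
minimum of `β(A,B) = |δ^in(A) ∪ δ^in(B)|` over all pairs `t ∈ A ⊊ B ⊆ V ∖ {s}`. -/
theorem stmt_17 {V : Type*} [Fintype V] [DecidableEq V]
    (E : Finset (V × V)) (s t : V) (hst : s ≠ t) (hV : 3 ≤ Fintype.card V) :
    sInf {n : ℕ | ∃ F ⊆ E, F.card = n ∧ ∃ r : V, r ≠ s ∧ r ≠ t ∧
        ¬ Relation.ReflTransGen (fun u v => (u, v) ∈ E \ F) s r ∧
        ¬ Relation.ReflTransGen (fun u v => (u, v) ∈ E \ F) r t ∧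
        ¬ Relation.ReflTransGen (fun u v => (u, v) ∈ E \ F) s t} =
    sInf {n : ℕ | ∃ A B : Finset V, t ∈ A ∧ A ⊂ B ∧ s ∉ B ∧
        ((E.filter (fun e => e.1 ∉ A ∧ e.2 ∈ A)) ∪
         (E.filter (fun e => e.1 ∉ B ∧ e.2 ∈ B))).card = n} := by
  classical
  apply sInf_eq_of_forall
  · -- from a cut set F produce a pair (A, B)
    rintro n ⟨F, hFE, hFcard, r, hrs, hrt, hsr, hrt2, hst2⟩
    set R : V → V → Prop := fun u v => (u, v) ∈ E \ F with hR
    set B : Finset V := Finset.univ.filter (fun v => ¬ Relation.ReflTransGen R s v) with hB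
    set A : Finset V := Finset.univ.filter
      (fun v => ¬ Relation.ReflTransGen R s v ∧ ¬ Relation.ReflTransGen R r v) with hA
    have hAmem : ∀ v, v ∈ A ↔
        ¬ Relation.ReflTransGen R s v ∧ ¬ Relation.ReflTransGen R r v := by
      intro v; simp [hA]
    have hBmem : ∀ v, v ∈ B ↔ ¬ Relation.ReflTransGen R s v := by
      intro v; simp [hB]
    refine ⟨_, Set.mem_setOf.mpr ⟨A, B, ?_, ?_, ?_, rfl⟩, ?_⟩
    · exact (hAmem t).mpr ⟨hst2, hrt2⟩
    · constructor
      · intro v hv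
        exact (hBmem v).mpr ((hAmem v).mp hv).1
      · intro hBA
        have hrB : r ∈ B := (hBmem r).mpr hsr
        have := (hAmem r).mp (hBA hrB)
        exact this.2 Relation.ReflTransGen.refl
    · intro hsB
      exact (hBmem s).mp hsB Relation.ReflTransGen.refl
    · rw [← hFcard]
      apply Finset.card_le_card
      intro e he
      rcases Finset.mem_union.mp he with he | he <;>
        obtain ⟨heE, h1, h2⟩ := Finset.mem_filter.mp he
      · -- e crosses into A
        by_contra heF
        have hRuv : R e.1 e.2 := Finset.mem_sdiff.mpr ⟨heE, heF⟩
        obtain ⟨hs2, hr2⟩ := (hAmem e.2).mp h2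
        rcases not_and_or.mp ((hAmem e.1).not.mp h1) with h | h
        · exact hs2 ((not_not.mp h).tail hRuv)
        · exact hr2 ((not_not.mp h).tail hRuv)
      · by_contra heF
        have hRuv : R e.1 e.2 := Finset.mem_sdiff.mpr ⟨heE, heF⟩
        have hs2 := (hBmem e.2).mp h2
        have hs1 := not_not.mp ((hBmem e.1).not.mp h1)
        exact hs2 (hs1.tail hRuv)
  · -- from a pair (A, B) produce a cut set F
    rintro n ⟨A, B, htA, hAB, hsB, hcard⟩
    set F : Finset (V × V) := (E.filter (fun e => e.1 ∉ A ∧ e.2 ∈ A)) ∪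
        (E.filter (fun e => e.1 ∉ B ∧ e.2 ∈ B)) with hF
    have hFE : F ⊆ E := by
      apply Finset.union_subset <;> exact Finset.filter_subset _ _
    obtain ⟨r, hrB, hrA⟩ := Finset.exists_of_ssubset hAB
    have hsA : s ∉ A := fun h => hsB (hAB.subset h)
    have hAcut : ∀ u v, (u, v) ∈ E \ F → u ∉ A → v ∈ A → False := by
      intro u v huv hu hv
      have := Finset.mem_sdiff.mp huv
      exact this.2 (Finset.mem_union_left _
        (Finset.mem_filter.mpr ⟨this.1, hu, hv⟩))
    have hBcut : ∀ u v, (u, v) ∈ E \ F → u ∉ B → v ∈ B → False := by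
      intro u v huv hu hv
      have := Finset.mem_sdiff.mp huv
      exact this.2 (Finset.mem_union_right _
        (Finset.mem_filter.mpr ⟨this.1, hu, hv⟩))
    refine ⟨F.card, Set.mem_setOf.mpr ⟨F, hFE, rfl, r, ?_, ?_, ?_, ?_, ?_⟩, ?_⟩
    · rintro rfl; exact hsB hrB
    · rintro rfl; exact hrA htA
    · intro h
      obtain ⟨u, v, huv, hu, hv⟩ := cross_lemma (X := fun v => v ∈ B) h hsB hrB
      exact hBcut u v huv hu hv
    · intro h
      obtain ⟨u, v, huv, hu, hv⟩ := cross_lemma (X := fun v => v ∈ A) h hrA htA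
      exact hAcut u v huv hu hv
    · intro h
      obtain ⟨u, v, huv, hu, hv⟩ := cross_lemma (X := fun v => v ∈ A) h hsA htA
      exact hAcut u v huv hu hv
    · rw [← hcard]
end

section
/- Let D=(V,E) be a finite directed graph with distinct vertices s,t ∈ V, let k ≥ 0, and let X and Z be two sets with t ∈ X ⊆ V∖{s} and t ∈ Z ⊆ V∖{s} such that X∖Z ≠ ∅ and Z∖X ≠ ∅, and with d^in(X) ≤ k and d^in(Z) ≤ k. Then at least one of the four pairs (A,B) ∈ {(X∩Z, X), (X∩Z, Z), (Z, X∪Z), (X, X∪Z)} satisfies t ∈ A ⊊ B ⊆ V∖{s} and 2·β(A,B) ≤ 3k. -/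
lemma stmt18_key (a b c d : Prop) [Decidable a] [Decidable b] [Decidable c] [Decidable d] :
    ((if (¬(a ∧ c) ∧ (b ∧ d)) ∨ (¬a ∧ b) then 1 else 0) +
     (if (¬(a ∧ c) ∧ (b ∧ d)) ∨ (¬c ∧ d) then 1 else 0) +
     (if (¬c ∧ d) ∨ (¬(a ∨ c) ∧ (b ∨ d)) then 1 else 0) +
     (if (¬a ∧ b) ∨ (¬(a ∨ c) ∧ (b ∨ d)) then 1 else 0) : ℕ) ≤
    3 * ((if ¬a ∧ b then 1 else 0) + (if ¬c ∧ d then 1 else 0)) := by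
  by_cases a <;> by_cases b <;> by_cases c <;> by_cases d <;> simp_all

theorem stmt_18 {V : Type*} [Fintype V] [DecidableEq V]
    (E : Finset (V × V)) (s t : V) (hst : s ≠ t) (k : ℕ)
    (X Z : Finset V) (htX : t ∈ X) (hsX : s ∉ X) (htZ : t ∈ Z) (hsZ : s ∉ Z)
    (hXZ : (X \ Z).Nonempty) (hZX : (Z \ X).Nonempty)
    (hdX : (E.filter (fun e => e.1 ∉ X ∧ e.2 ∈ X)).card ≤ k)
    (hdZ : (E.filter (fun e => e.1 ∉ Z ∧ e.2 ∈ Z)).card ≤ k) :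
    ∃ A B : Finset V,
      ((A = X ∩ Z ∧ B = X) ∨ (A = X ∩ Z ∧ B = Z) ∨
       (A = Z ∧ B = X ∪ Z) ∨ (A = X ∧ B = X ∪ Z)) ∧
      t ∈ A ∧ A ⊂ B ∧ s ∉ B ∧
      2 * ((E.filter (fun e => e.1 ∉ A ∧ e.2 ∈ A)) ∪
           (E.filter (fun e => e.1 ∉ B ∧ e.2 ∈ B))).card ≤ 3 * k := by
  obtain ⟨x, hx⟩ := hXZ
  obtain ⟨z, hz⟩ := hZX
  simp only [Finset.mem_sdiff] at hx hz
  set F : Finset V → Finset (V × V) := fun S => E.filter (fun e => e.1 ∉ S ∧ e.2 ∈ S) with hF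
  have hcard : ∀ S T : Finset V, (F S ∪ F T).card =
      ∑ e ∈ E, (if (e.1 ∉ S ∧ e.2 ∈ S) ∨ (e.1 ∉ T ∧ e.2 ∈ T) then 1 else 0) := by
    intro S T
    rw [hF]
    simp only [Finset.filter_union_right]
    rw [Finset.card_filter]
  have hmem : ∀ (S T : Finset V) (e : V × V),
      (e.1 ∉ S ∩ T) = ¬(e.1 ∈ S ∧ e.1 ∈ T) ∧ True := by
    intro S T e; simp
  have hsum : (F (X ∩ Z) ∪ F X).card + (F (X ∩ Z) ∪ F Z).card +
      (F Z ∪ F (X ∪ Z)).card + (F X ∪ F (X ∪ Z)).card ≤ 3 * ((F X).card + (F Z).card) := by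
    have h1 : (F X).card = ∑ e ∈ E, (if ¬(e.1 ∈ X) ∧ e.2 ∈ X then 1 else 0) := by
      rw [hF, Finset.card_filter]
    have h2 : (F Z).card = ∑ e ∈ E, (if ¬(e.1 ∈ Z) ∧ e.2 ∈ Z then 1 else 0) := by
      rw [hF, Finset.card_filter]
    rw [hcard, hcard, hcard, hcard, h1, h2, ← Finset.sum_add_distrib,
      ← Finset.sum_add_distrib, ← Finset.sum_add_distrib, ← Finset.sum_add_distrib,
      Finset.mul_sum]
    apply Finset.sum_le_sum
    intro e _
    have := stmt18_key (e.1 ∈ X) (e.2 ∈ X) (e.1 ∈ Z) (e.2 ∈ Z)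
    simp only [Finset.mem_inter, Finset.mem_union] at *
    convert this using 4 <;> tauto
  have hdX' : (F X).card ≤ k := hdX
  have hdZ' : (F Z).card ≤ k := hdZ
  have hstruct : 2 * (F (X ∩ Z) ∪ F X).card ≤ 3 * k ∨ 2 * (F (X ∩ Z) ∪ F Z).card ≤ 3 * k ∨
      2 * (F Z ∪ F (X ∪ Z)).card ≤ 3 * k ∨ 2 * (F X ∪ F (X ∪ Z)).card ≤ 3 * k := by
    omega
  have htI : t ∈ X ∩ Z := Finset.mem_inter.2 ⟨htX, htZ⟩
  have hsU : s ∉ X ∪ Z := by simp [hsX, hsZ]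
  rcases hstruct with h | h | h | h
  · exact ⟨X ∩ Z, X, Or.inl ⟨rfl, rfl⟩, htI,
      ⟨Finset.inter_subset_left, fun hsub => hx.2 (Finset.mem_inter.1 (hsub hx.1)).2⟩,
      hsX, h⟩
  · exact ⟨X ∩ Z, Z, Or.inr (Or.inl ⟨rfl, rfl⟩), htI,
      ⟨Finset.inter_subset_right, fun hsub => hz.2 (Finset.mem_inter.1 (hsub hz.1)).1⟩,
      hsZ, h⟩
  · exact ⟨Z, X ∪ Z, Or.inr (Or.inr (Or.inl ⟨rfl, rfl⟩)), htZ,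
      ⟨Finset.subset_union_right, fun hsub => hx.2 (hsub (Finset.mem_union_left _ hx.1))⟩,
      hsU, h⟩
  · exact ⟨X, X ∪ Z, Or.inr (Or.inr (Or.inr ⟨rfl, rfl⟩)), htX,
      ⟨Finset.subset_union_left, fun hsub => hz.2 (hsub (Finset.mem_union_right _ hz.1))⟩,
      hsU, h⟩
end

section
/- Let G=(V,E) be a finite undirected graph, let k ≥ 3, and let s,t ∈ V be distinct. Let (V₁,…,V_k) be a partition of V into k nonempty parts with s ∈ V_{k−1} and t ∈ V_k whose cut value γ(V₁,…,V_k) is minimum among all partitions of V into k nonempty parts in which s and t lie in different parts. Let μ be the minimum of γ(W₁,…,W_{k−1}) over all partitions of V into k−1 nonempty parts in which s and t lie in the same part. Then γ(V₁,…,V_{k−2}, V_{k−1} ∪ V_k) ≤ 2μ. -/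
/-- The cut value of a family of parts `P : ι → Set V` in an undirected graph `G`:
the number of edges of `G` whose two endpoints do not lie in a common part. -/
noncomputable def cutVal {V ι : Type*} (G : SimpleGraph V) (P : ι → Set V) : ℕ :=
  {e : Sym2 V | e ∈ G.edgeSet ∧ ¬ ∃ i, ∀ v ∈ e, v ∈ P i}.ncard

/-!
Let `Γ` be the value of the optimal `k`-partition separating `s ∈ V_s` from `t ∈ V_t`, and `W` an
optimal `(k-1)`-partition, of value `μ`, with `s, t ∈ W i₀`. For every `X` containing `s` but not
`t`, splitting `W i₀` along `X` yields a `k`-partition separating `s` from `t` of value at most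
`μ + |δX|`, so `Γ ≤ μ + |δX|`; apply this to `X = V_s` and `X = V_tᶜ`. Conversely, an edge
counted by the merged partition, by `δV_s` or by `δV_t` is cut by the optimal partition and is
counted at most twice, so `γ(merged) + |δV_s| + |δV_t| ≤ 2Γ ≤ 2μ + |δV_s| + |δV_t|`.
-/

open Set Function

lemma Nat.le_mul_sInf {S : Set ℕ} {a c : ℕ} (hS : S.Nonempty) (h : ∀ n ∈ S, a ≤ c * n) :
    a ≤ c * sInf S :=
  h _ (Nat.sInf_mem hS)

lemma Set.ncard_add_ncard_add_ncard_le_two_mul {α : Type*} {A B C D : Set α} (hD : D.Finite)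
    (hAD : A ⊆ D) (hBD : B ⊆ D) (hCD : C ⊆ D) (hABC : Disjoint A (B ∩ C)) :
    A.ncard + B.ncard + C.ncard ≤ 2 * D.ncard := by
  have hBC := ncard_union_add_ncard_inter B C (hD.subset hBD) (hD.subset hCD)
  have hunion : (B ∪ C).ncard ≤ D.ncard := ncard_le_ncard (union_subset hBD hCD) hD
  have hinter : A.ncard + (B ∩ C).ncard ≤ D.ncard := by
    rw [← ncard_union_eq hABC (hD.subset hAD) (hD.subset (inter_subset_left.trans hBD))]
    exact ncard_le_ncard (union_subset hAD (inter_subset_left.trans hBD)) hD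
  omega

section Cuts

variable {V ι κ : Type*} (G : SimpleGraph V)

def cutSet (P : ι → Set V) : Set (Sym2 V) :=
  {e | e ∈ G.edgeSet ∧ ¬ ∃ i, ∀ v ∈ e, v ∈ P i}

def edgeBoundary (X : Set V) : Set (Sym2 V) :=
  {e | e ∈ G.edgeSet ∧ (∃ v ∈ e, v ∈ X) ∧ ∃ v ∈ e, v ∉ X}

lemma cutVal_eq_ncard_cutSet (P : ι → Set V) : cutVal G P = (cutSet G P).ncard := rfl

lemma edgeBoundary_compl (X : Set V) : edgeBoundary G Xᶜ = edgeBoundary G X := by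
  ext e
  simp only [edgeBoundary, mem_ofPred_eq, mem_compl_iff, not_not, and_congr_right_iff]
  exact fun _ => and_comm

lemma cutSet_subset_of_forall_exists_subset {P : ι → Set V} {Q : κ → Set V}
    (h : ∀ i, ∃ j, P i ⊆ Q j) : cutSet G Q ⊆ cutSet G P := by
  rintro e ⟨he, hQ⟩
  refine ⟨he, fun ⟨i, hi⟩ => hQ ?_⟩
  obtain ⟨j, hj⟩ := h i
  exact ⟨j, fun v hv => hj (hi v hv)⟩

lemma cutVal_comp_equiv (P : ι → Set V) (e : κ ≃ ι) : cutVal G (P ∘ e) = cutVal G P := by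
  rw [cutVal_eq_ncard_cutSet, cutVal_eq_ncard_cutSet]
  congr 1
  exact (cutSet_subset_of_forall_exists_subset G fun i => ⟨e.symm i, by simp⟩).antisymm
    (cutSet_subset_of_forall_exists_subset G fun i => ⟨e i, subset_rfl⟩)

lemma cutSet_subset_cutSet_union_edgeBoundary {P : ι → Set V} {Q : κ → Set V} (X : Set V)
    (hin : ∀ i, ∃ j, P i ∩ X ⊆ Q j) (hout : ∀ i, ∃ j, P i \ X ⊆ Q j) :
    cutSet G Q ⊆ cutSet G P ∪ edgeBoundary G X := by
  rintro e ⟨he, hQ⟩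
  by_contra hPX
  rw [mem_union, not_or] at hPX
  obtain ⟨i, hi⟩ : ∃ i, ∀ v ∈ e, v ∈ P i := by simpa [cutSet, he] using hPX.1
  have hX : (∀ v ∈ e, v ∈ X) ∨ ∀ v ∈ e, v ∉ X := by
    by_contra! h
    exact hPX.2 ⟨he, h.2, h.1⟩
  apply hQ
  rcases hX with hX | hX
  · obtain ⟨j, hj⟩ := hin i
    exact ⟨j, fun v hv => hj ⟨hi v hv, hX v hv⟩⟩
  · obtain ⟨j, hj⟩ := hout i
    exact ⟨j, fun v hv => hj ⟨hi v hv, hX v hv⟩⟩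

lemma cutVal_le_cutVal_add_ncard_edgeBoundary [Finite V] {P : ι → Set V} {Q : κ → Set V}
    (X : Set V) (hin : ∀ i, ∃ j, P i ∩ X ⊆ Q j) (hout : ∀ i, ∃ j, P i \ X ⊆ Q j) :
    cutVal G Q ≤ cutVal G P + (edgeBoundary G X).ncard :=
  (ncard_le_ncard (cutSet_subset_cutSet_union_edgeBoundary G X hin hout) (toFinite _)).trans
    (ncard_union_le _ _)

lemma edgeBoundary_subset_cutSet {P : ι → Set V} (hP : Pairwise (Disjoint on P)) (i : ι) :
    edgeBoundary G (P i) ⊆ cutSet G P := by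
  rintro e ⟨he, ⟨u, hue, hu⟩, ⟨w, hwe, hw⟩⟩
  refine ⟨he, fun ⟨j, hj⟩ => hw ?_⟩
  obtain rfl : i = j := hP.eq (not_disjoint_iff.mpr ⟨u, hu, hj u hue⟩)
  exact hj w hwe

lemma forall_mem_union_of_mem_edgeBoundary_inter {X Y : Set V} (hXY : Disjoint X Y) {e : Sym2 V}
    (he : e ∈ edgeBoundary G X ∩ edgeBoundary G Y) : ∀ v ∈ e, v ∈ X ∪ Y := by
  induction e using Sym2.ind with
  | _ u w =>
    have hu := hXY.notMem_of_mem_left (a := u)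
    have hw := hXY.notMem_of_mem_left (a := w)
    simp only [edgeBoundary, inter_def, mem_ofPred_eq, Sym2.mem_iff] at he
    intro v hv
    rw [Sym2.mem_iff] at hv
    rcases hv with rfl | rfl <;> aesop

lemma disjoint_cutSet_edgeBoundary_inter {P : ι → Set V} {X Y : Set V} (hXY : Disjoint X Y)
    {j : ι} (hj : X ∪ Y ⊆ P j) : Disjoint (cutSet G P) (edgeBoundary G X ∩ edgeBoundary G Y) :=
  disjoint_left.mpr fun _ ⟨_, hcut⟩ he =>
    hcut ⟨j, fun v hv => hj (forall_mem_union_of_mem_edgeBoundary_inter G hXY he v hv)⟩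

lemma cutVal_add_ncard_edgeBoundary_add_ncard_edgeBoundary_le [Finite V] {F : ι → Set V}
    {R : κ → Set V} (hF : Pairwise (Disjoint on F)) {a b : ι} (hab : a ≠ b)
    (hFR : ∀ i, ∃ j, F i ⊆ R j) {j : κ} (hj : F a ∪ F b ⊆ R j) :
    cutVal G R + (edgeBoundary G (F a)).ncard + (edgeBoundary G (F b)).ncard ≤
      2 * cutVal G F :=
  ncard_add_ncard_add_ncard_le_two_mul (toFinite _) (cutSet_subset_of_forall_exists_subset G hFR)
    (edgeBoundary_subset_cutSet G hF a) (edgeBoundary_subset_cutSet G hF b)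
    (disjoint_cutSet_edgeBoundary_inter G (hF hab) hj)

end Cuts

section Partitions

variable {V ι κ : Type*}

structure IsNonemptyPartition (W : ι → Set V) : Prop where
  nonempty : ∀ i, (W i).Nonempty
  pairwise_disjoint : Pairwise (Disjoint on W)
  iUnion_eq_univ : ⋃ i, W i = univ

lemma IsNonemptyPartition.comp_equiv {W : ι → Set V} (hW : IsNonemptyPartition W) (e : κ ≃ ι) :
    IsNonemptyPartition (W ∘ e) where
  nonempty i := hW.nonempty (e i)
  pairwise_disjoint := hW.pairwise_disjoint.comp_of_injective e.injective
  iUnion_eq_univ := by rw [← hW.iUnion_eq_univ]; exact e.surjective.iUnion_comp W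

lemma isNonemptyPartition_optionElim {Y : Set V} {P : ι → Set V} (hY : Y.Nonempty)
    (hP : ∀ i, (P i).Nonempty) (hPP : Pairwise (Disjoint on P)) (hPY : ∀ i, Disjoint (P i) Y)
    (hcover : (⋃ i, P i) ∪ Y = univ) :
    IsNonemptyPartition fun o : Option ι => o.elim Y P where
  nonempty := by rintro (_ | i) <;> simp [hY, hP]
  pairwise_disjoint := by
    rintro (_ | i) (_ | j) hij
    exacts [absurd rfl hij, (hPY j).symm, hPY i, hPP (by simpa using hij)]
  iUnion_eq_univ := by
    rw [← hcover, iUnion_option, union_comm]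
    rfl

variable [DecidableEq ι]

def splitPartition (W : ι → Set V) (i₀ : ι) (X : Set V) : Option ι → Set V :=
  fun o => o.elim (W i₀ ∩ X) (update W i₀ (W i₀ \ X))

lemma update_diff_subset (W : ι → Set V) (i₀ : ι) (X : Set V) (i : ι) :
    update W i₀ (W i₀ \ X) i ⊆ W i := by
  rcases eq_or_ne i i₀ with rfl | hi
  · simp
  · simp [hi]

lemma IsNonemptyPartition.splitPartition {W : ι → Set V} (hW : IsNonemptyPartition W) {i₀ : ι}
    {X : Set V} {s t : V} (hs : s ∈ W i₀ ∩ X) (ht : t ∈ W i₀ \ X) :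
    IsNonemptyPartition (splitPartition W i₀ X) := by
  refine isNonemptyPartition_optionElim ⟨s, hs⟩ (fun i => ?_) (fun i j hij => ?_) (fun i => ?_) ?_
  · rcases eq_or_ne i i₀ with rfl | hi
    · exact ⟨t, by simpa using ht⟩
    · simpa [hi] using hW.nonempty i
  · exact (hW.pairwise_disjoint hij).mono (update_diff_subset W i₀ X i)
      (update_diff_subset W i₀ X j)
  · rcases eq_or_ne i i₀ with rfl | hi
    · simpa using disjoint_sdiff_inter
    · exact (hW.pairwise_disjoint hi).mono (update_diff_subset W i₀ X i) inter_subset_left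
  · refine eq_univ_of_forall fun x => ?_
    obtain ⟨i, hi⟩ := mem_iUnion.mp (hW.iUnion_eq_univ.symm ▸ mem_univ x)
    by_cases hx : i = i₀ ∧ x ∈ X
    · exact Or.inr (hx.1 ▸ ⟨hi, hx.2⟩)
    · refine Or.inl (mem_iUnion.mpr ⟨i, ?_⟩)
      rcases eq_or_ne i i₀ with rfl | hi'
      · simpa using ⟨hi, hx ∘ And.intro rfl⟩
      · simpa [hi'] using hi

lemma splitPartition_separates {W : ι → Set V} (hW : Pairwise (Disjoint on W)) {i₀ : ι}
    {X : Set V} {s t : V} (hs : s ∈ W i₀ ∩ X) (ht : t ∈ W i₀ \ X) (o : Option ι) :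
    ¬ (s ∈ splitPartition W i₀ X o ∧ t ∈ splitPartition W i₀ X o) := by
  rintro ⟨hso, hto⟩
  rcases o with _ | i
  · exact ht.2 hto.2
  · rcases eq_or_ne i i₀ with rfl | hi
    · simp only [splitPartition, Option.elim, update_self] at hso
      exact hso.2 hs.2
    · exact (hW hi).notMem_of_mem_left (update_diff_subset W i₀ X i hso) hs.1

lemma cutVal_splitPartition_le [Finite V] (G : SimpleGraph V) (W : ι → Set V) (i₀ : ι)
    (X : Set V) : cutVal G (splitPartition W i₀ X) ≤ cutVal G W + (edgeBoundary G X).ncard := by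
  refine cutVal_le_cutVal_add_ncard_edgeBoundary G X (fun i => ?_) (fun i => ⟨some i, ?_⟩)
  · rcases eq_or_ne i i₀ with rfl | hi
    · exact ⟨none, subset_rfl⟩
    · exact ⟨some i, by simp [splitPartition, hi, inter_subset_left]⟩
  · rcases eq_or_ne i i₀ with rfl | hi
    · simp [splitPartition]
    · simp [splitPartition, hi]

end Partitions

theorem stmt_19_general {V : Type*} [Fintype V] (G : SimpleGraph V) (k : ℕ) (hk : 3 ≤ k)
    (s t : V)
    (P : Fin (k - 2) → Set V) (Vs Vt : Set V)
    (hPne : ∀ i, (P i).Nonempty)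
    (hs : s ∈ Vs) (ht : t ∈ Vt)
    (hdisjP : ∀ i j, i ≠ j → Disjoint (P i) (P j))
    (hdisjPs : ∀ i, Disjoint (P i) Vs) (hdisjPt : ∀ i, Disjoint (P i) Vt)
    (hdisjst : Disjoint Vs Vt)
    (hcover : (⋃ i, P i) ∪ Vs ∪ Vt = Set.univ)
    (hmin : ∀ Q : Fin k → Set V,
      (∀ i, (Q i).Nonempty) → (∀ i j, i ≠ j → Disjoint (Q i) (Q j)) →
      (⋃ i, Q i) = Set.univ → (∀ i, ¬ (s ∈ Q i ∧ t ∈ Q i)) →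
      cutVal G (Sum.elim P (fun b : Bool => if b then Vt else Vs)) ≤ cutVal G Q) :
    cutVal G (fun o : Option (Fin (k - 2)) => o.elim (Vs ∪ Vt) P) ≤
      2 * sInf {n : ℕ | ∃ W : Fin (k - 1) → Set V,
        (∀ i, (W i).Nonempty) ∧ (∀ i j, i ≠ j → Disjoint (W i) (W j)) ∧
        (⋃ i, W i) = Set.univ ∧ (∃ i, s ∈ W i ∧ t ∈ W i) ∧
        cutVal G W = n} := by
  set F : Fin (k - 2) ⊕ Bool → Set V := Sum.elim P fun b => if b then Vt else Vs
  set R : Option (Fin (k - 2)) → Set V := fun o => o.elim (Vs ∪ Vt) P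
  have hF : Pairwise (Disjoint on F) := by
    rintro (i | _ | _) (j | _ | _) hij
    exacts [hdisjP i j (hij ∘ congrArg _), hdisjPs i, hdisjPt i, (hdisjPs j).symm, absurd rfl hij,
      hdisjst, (hdisjPt j).symm, hdisjst.symm, absurd rfl hij]
  have hFR : ∀ i, ∃ j, F i ⊆ R j := by
    rintro (i | _ | _)
    exacts [⟨some i, subset_rfl⟩, ⟨none, subset_union_left⟩, ⟨none, subset_union_right⟩]
  have eR : Fin (k - 1) ≃ Option (Fin (k - 2)) := (finCongr (by omega)).trans (finSuccEquiv _)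
  have eQ : Fin k ≃ Option (Fin (k - 1)) := (finCongr (by omega)).trans (finSuccEquiv _)
  have hR := (isNonemptyPartition_optionElim ⟨s, Or.inl hs⟩ hPne (fun i j hij => hdisjP i j hij)
    (fun i => (hdisjPs i).union_right (hdisjPt i)) (by rw [← hcover, union_assoc])).comp_equiv eR
  refine Nat.le_mul_sInf ⟨_, R ∘ eR, hR.nonempty, fun i j hij => hR.pairwise_disjoint hij,
    hR.iUnion_eq_univ, ⟨eR.symm none, by simp [R, hs], by simp [R, ht]⟩, rfl⟩ ?_
  rintro _ ⟨W, hWne, hWd, hWcov, ⟨i₀, hsW, htW⟩, rfl⟩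
  have hW : IsNonemptyPartition W := ⟨hWne, fun i j hij => hWd i j hij, hWcov⟩
  have hsplit (X : Set V) (hsX : s ∈ X) (htX : t ∉ X) :
      cutVal G F ≤ cutVal G W + (edgeBoundary G X).ncard := by
    have hQ := (hW.splitPartition ⟨hsW, hsX⟩ ⟨htW, htX⟩).comp_equiv eQ
    calc cutVal G F ≤ cutVal G (splitPartition W i₀ X ∘ eQ) :=
          hmin _ hQ.nonempty (fun i j hij => hQ.pairwise_disjoint hij) hQ.iUnion_eq_univ
            fun i => splitPartition_separates hW.pairwise_disjoint ⟨hsW, hsX⟩ ⟨htW, htX⟩ _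
      _ = cutVal G (splitPartition W i₀ X) := cutVal_comp_equiv G _ eQ
      _ ≤ cutVal G W + (edgeBoundary G X).ncard := cutVal_splitPartition_le G W i₀ X
  have hVs := hsplit Vs hs (hdisjst.notMem_of_mem_right ht)
  have hVt := hsplit Vtᶜ (hdisjst.notMem_of_mem_left hs) (not_not.mpr ht)
  rw [edgeBoundary_compl] at hVt
  have hmerge : cutVal G R + (edgeBoundary G Vs).ncard + (edgeBoundary G Vt).ncard ≤
      2 * cutVal G F := cutVal_add_ncard_edgeBoundary_add_ncard_edgeBoundary_le G hF
    (a := .inr false) (b := .inr true) (by simp) hFR (j := none) subset_rfl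
  omega

/-- let `(P 0, …, P (k-3), Vs, Vt)` be a partition of `V` into `k`
nonempty parts with `s ∈ Vs`, `t ∈ Vt`, of minimum cut value among all partitions
into `k` nonempty parts separating `s` from `t`, and let `μ` be the minimum cut value
of a partition of `V` into `k-1` nonempty parts with `s` and `t` in the same part.
Then merging `Vs` and `Vt` yields a `(k-1)`-partition of cut value at most `2μ`. -/
theorem stmt_19 {V : Type*} [Fintype V] (G : SimpleGraph V) (k : ℕ) (hk : 3 ≤ k)
    (s t : V) (hst : s ≠ t)
    (P : Fin (k - 2) → Set V) (Vs Vt : Set V)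
    (hPne : ∀ i, (P i).Nonempty) (hVs : Vs.Nonempty) (hVt : Vt.Nonempty)
    (hs : s ∈ Vs) (ht : t ∈ Vt)
    (hdisjP : ∀ i j, i ≠ j → Disjoint (P i) (P j))
    (hdisjPs : ∀ i, Disjoint (P i) Vs) (hdisjPt : ∀ i, Disjoint (P i) Vt)
    (hdisjst : Disjoint Vs Vt)
    (hcover : (⋃ i, P i) ∪ Vs ∪ Vt = Set.univ)
    (hmin : ∀ Q : Fin k → Set V,
      (∀ i, (Q i).Nonempty) → (∀ i j, i ≠ j → Disjoint (Q i) (Q j)) →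
      (⋃ i, Q i) = Set.univ → (∀ i, ¬ (s ∈ Q i ∧ t ∈ Q i)) →
      cutVal G (Sum.elim P (fun b : Bool => if b then Vt else Vs)) ≤ cutVal G Q) :
    cutVal G (fun o : Option (Fin (k - 2)) => o.elim (Vs ∪ Vt) P) ≤
      2 * sInf {n : ℕ | ∃ W : Fin (k - 1) → Set V,
        (∀ i, (W i).Nonempty) ∧ (∀ i j, i ≠ j → Disjoint (W i) (W j)) ∧
        (⋃ i, W i) = Set.univ ∧ (∃ i, s ∈ W i ∧ t ∈ W i) ∧
        cutVal G W = n} :=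
  stmt_19_general G k hk s t P Vs Vt hPne hs ht hdisjP hdisjPs hdisjPt hdisjst hcover hmin
end
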